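/- arXiv:1910.09662 — 3 statements merged into one kernel-verified Lean document; each statement's English description precedes it below -/
import Mathlib

section
/- For independent standard normal random variables Z₁, Z₂ and any ε ∈ (0,1], setting M = max(1, ε⁻¹·(log(1/ε))^{1/2}), the probability P(√M·|Z₁| ≤ |Z₂| + (M+1)·ε) is at most K·ε^{1/2}·(log(1/ε))^{1/4} for some absolute constant K > 0. -/
/-!
If `√M |Z₁| ≤ |Z₂| + c`, then `|Z₂| ≥ T` or `|Z₁| ≤ (T + c) / √M`. For `T = √(2 log₊(1/ε))` the
Chernoff bound gives the first event probability at most `2ε`. The standard Gaussian density is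
at most `1/2`, so the second event has probability at most `(T + c) / √M`, which for the given `M`
is of order `√ε (log₊(1/ε))^{1/4}`.
-/

open MeasureTheory ProbabilityTheory Real

section Gaussian

variable {Ω : Type*} [MeasurableSpace Ω] {μ : Measure Ω}

lemma hasSubgaussianMGF_of_map_eq_gaussianReal {X : Ω → ℝ} {v : NNReal}
    (hX : μ.map X = gaussianReal 0 v) : HasSubgaussianMGF X v μ := by
  have hXm : AEMeasurable X μ := .of_map_ne_zero (by simp [hX, NeZero.ne])
  rw [← HasSubgaussianMGF.id_map_iff hXm, hX]
  exact ⟨integrable_exp_mul_gaussianReal, fun t ↦ by simp [mgf_id_gaussianReal]⟩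

lemma ProbabilityTheory.HasSubgaussianMGF.measure_le_abs_le [IsFiniteMeasure μ] {X : Ω → ℝ} {c : NNReal}
    (h : HasSubgaussianMGF X c μ) {T : ℝ} (hT : 0 ≤ T) :
    μ {ω | T ≤ |X ω|} ≤ ENNReal.ofReal (2 * exp (-T ^ 2 / (2 * c))) := by
  have hsplit : {ω | T ≤ |X ω|} = {ω | T ≤ X ω} ∪ {ω | T ≤ (-X) ω} := by
    ext ω
    simp only [le_abs', Set.mem_ofPred_eq, Set.mem_union, Pi.neg_apply, le_neg]
    tauto
  have htail {Y : Ω → ℝ} (hY : HasSubgaussianMGF Y c μ) :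
      μ {ω | T ≤ Y ω} ≤ ENNReal.ofReal (exp (-T ^ 2 / (2 * c))) := by
    rw [← ofReal_measureReal]
    exact ENNReal.ofReal_le_ofReal (hY.measure_ge_le hT)
  calc μ {ω | T ≤ |X ω|} ≤ μ {ω | T ≤ X ω} + μ {ω | T ≤ (-X) ω} :=
        hsplit ▸ measure_union_le _ _
    _ ≤ ENNReal.ofReal (exp (-T ^ 2 / (2 * c))) + ENNReal.ofReal (exp (-T ^ 2 / (2 * c))) :=
        add_le_add (htail h) (htail h.neg)
    _ = ENNReal.ofReal (2 * exp (-T ^ 2 / (2 * c))) := by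
        rw [← ENNReal.ofReal_add (by positivity) (by positivity)]
        ring_nf

lemma gaussianReal_le_ofReal_mul_volume (m : ℝ) {v : NNReal} (hv : v ≠ 0) (s : Set ℝ) :
    gaussianReal m v s ≤ ENNReal.ofReal (√(2 * π * v))⁻¹ * volume s := by
  rw [gaussianReal_apply m hv, ← setLIntegral_const]
  refine setLIntegral_mono measurable_const fun x _ ↦ ENNReal.ofReal_le_ofReal ?_
  exact mul_le_of_le_one_right (by positivity) (exp_le_one_iff.2
    (div_nonpos_of_nonpos_of_nonneg (neg_nonpos.2 (sq_nonneg _)) (by positivity)))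

lemma gaussianReal_abs_le_le (a : ℝ) : gaussianReal 0 1 {x | |x| ≤ a} ≤ ENNReal.ofReal a := by
  rcases lt_or_ge a 0 with ha | ha
  · simp [fun x ↦ ((abs_nonneg x).trans_lt' ha).not_ge]
  have hIcc : {x : ℝ | |x| ≤ a} = Set.Icc (-a) a := by ext; simp [abs_le]
  have hsqrt : 2 ≤ √(2 * π * (1 : NNReal)) :=
    le_sqrt_of_sq_le (by push_cast; nlinarith [pi_gt_three])
  calc gaussianReal 0 1 {x | |x| ≤ a}
      ≤ ENNReal.ofReal (√(2 * π * (1 : NNReal)))⁻¹ * volume (Set.Icc (-a) a) :=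
        hIcc ▸ gaussianReal_le_ofReal_mul_volume 0 one_ne_zero _
    _ ≤ ENNReal.ofReal a := by
        rw [volume_Icc, ← ENNReal.ofReal_mul (by positivity)]
        refine ENNReal.ofReal_le_ofReal ?_
        rw [inv_mul_le_iff₀ (by positivity)]
        nlinarith

lemma measure_mul_abs_le_abs_add_le {X Y : Ω → ℝ} {m : ℝ} (hm : 0 < m) (c T : ℝ) :
    μ {ω | m * |X ω| ≤ |Y ω| + c} ≤ μ {ω | T ≤ |Y ω|} + μ {ω | |X ω| ≤ (T + c) / m} := by
  refine (measure_mono fun ω (hω : m * |X ω| ≤ |Y ω| + c) ↦ ?_).trans (measure_union_le _ _)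
  by_cases hY : T ≤ |Y ω|
  · exact Or.inl hY
  · exact Or.inr ((le_div_iff₀' hm).2 (by linarith [not_le.1 hY]))

lemma measure_mul_abs_le_abs_add_le_of_gaussian [IsFiniteMeasure μ] {X Y : Ω → ℝ}
    (hX : μ.map X = gaussianReal 0 1) (hY : μ.map Y = gaussianReal 0 1)
    {m c T : ℝ} (hm : 0 < m) (hc : 0 ≤ c) (hT : 0 ≤ T) :
    μ {ω | m * |X ω| ≤ |Y ω| + c} ≤ ENNReal.ofReal (2 * exp (-T ^ 2 / 2) + (T + c) / m) := by
  have hXm : AEMeasurable X μ := .of_map_ne_zero (by simp [hX, NeZero.ne])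
  have hsmall : μ {ω | |X ω| ≤ (T + c) / m} ≤ ENNReal.ofReal ((T + c) / m) := by
    have hmeas : MeasurableSet {x : ℝ | |x| ≤ (T + c) / m} :=
      measurableSet_le measurable_abs measurable_const
    change μ (X ⁻¹' {x | |x| ≤ (T + c) / m}) ≤ _
    rw [← Measure.map_apply_of_aemeasurable hXm hmeas, hX]
    exact gaussianReal_abs_le_le _
  calc μ {ω | m * |X ω| ≤ |Y ω| + c}
      ≤ μ {ω | T ≤ |Y ω|} + μ {ω | |X ω| ≤ (T + c) / m} :=
        measure_mul_abs_le_abs_add_le hm c T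
    _ ≤ ENNReal.ofReal (2 * exp (-T ^ 2 / (2 * (1 : NNReal)))) + ENNReal.ofReal ((T + c) / m) :=
        add_le_add ((hasSubgaussianMGF_of_map_eq_gaussianReal hY).measure_le_abs_le hT) hsmall
    _ = ENNReal.ofReal (2 * exp (-T ^ 2 / 2) + (T + c) / m) := by
        rw [← ENNReal.ofReal_add (by positivity) (by positivity), NNReal.coe_one, mul_one]

end Gaussian

lemma two_mul_exp_neg_add_div_sqrt_le {ε L : ℝ} (hε : 0 < ε) (hε1 : ε ≤ 1) (hL : 1 ≤ L)
    (hεL : log (1 / ε) ≤ L) :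
    2 * exp (-L) + (√(2 * L) + (max 1 (ε⁻¹ * L ^ (1 / 2 : ℝ)) + 1) * ε) /
        √(max 1 (ε⁻¹ * L ^ (1 / 2 : ℝ))) ≤ 6 * ε ^ (1 / 2 : ℝ) * L ^ (1 / 4 : ℝ) := by
  set s := ε ^ (1 / 2 : ℝ)
  set l := L ^ (1 / 4 : ℝ)
  have hs : 0 < s := by positivity
  have hs1 : s ≤ 1 := rpow_le_one hε.le hε1 (by norm_num)
  have hl : 1 ≤ l := one_le_rpow hL (by norm_num)
  have hε_eq : ε = s ^ 2 := by rw [← rpow_natCast, ← rpow_mul hε.le]; norm_num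
  have hL_eq : L ^ (1 / 2 : ℝ) = l ^ 2 := by
    rw [← rpow_natCast, ← rpow_mul (by linarith)]; norm_num
  have hM : max 1 (ε⁻¹ * L ^ (1 / 2 : ℝ)) = (l / s) ^ 2 := by
    rw [hε_eq, hL_eq, div_pow, inv_mul_eq_div, max_eq_right]
    rw [one_le_div (by positivity)]
    nlinarith
  have hMε : ((l / s) ^ 2 + 1) * ε = l ^ 2 + s ^ 2 := by rw [hε_eq]; field_simp
  have hT : √(2 * L) ≤ 3 / 2 * l ^ 2 := by
    rw [sqrt_mul zero_le_two, sqrt_eq_rpow L, hL_eq]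
    have : √2 ≤ 3 / 2 := sqrt_le_iff.2 (by norm_num)
    nlinarith
  have hexp : exp (-L) ≤ s ^ 2 := by
    rw [← hε_eq, ← exp_log hε]
    rw [one_div, log_inv] at hεL
    exact exp_le_exp.2 (by linarith)
  have hfrac : (√(2 * L) + (l ^ 2 + s ^ 2)) / (l / s) ≤ 7 / 2 * s * l :=
    calc (√(2 * L) + (l ^ 2 + s ^ 2)) / (l / s) ≤ (7 / 2 * l ^ 2) / (l / s) :=
          div_le_div_of_nonneg_right (by nlinarith) (by positivity)
      _ = 7 / 2 * s * l := by field_simp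
  rw [hM, sqrt_sq (by positivity), hMε]
  nlinarith [mul_le_mul_of_nonneg_left (hs1.trans hl) hs.le]

theorem gaussian_ratio_anti_concentration_general {Ω : Type} [MeasureSpace Ω]
    [IsProbabilityMeasure (ℙ : Measure Ω)]
    (Z₁ Z₂ : Ω → ℝ)
    (h₁ : Measure.map Z₁ ℙ = gaussianReal 0 1)
    (h₂ : Measure.map Z₂ ℙ = gaussianReal 0 1) :
    ∃ K : ℝ, 0 < K ∧ ∀ ε : ℝ, ε ∈ Set.Ioc (0 : ℝ) 1 →
      ℙ {ω | Real.sqrt (max 1 (ε⁻¹ * (max 1 (Real.log (1 / ε))) ^ ((1 : ℝ) / 2))) * |Z₁ ω| ≤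
            |Z₂ ω| + (max 1 (ε⁻¹ * (max 1 (Real.log (1 / ε))) ^ ((1 : ℝ) / 2)) + 1) * ε} ≤
        ENNReal.ofReal (K * ε ^ ((1 : ℝ) / 2) * (max 1 (Real.log (1 / ε))) ^ ((1 : ℝ) / 4)) := by
  refine ⟨6, by norm_num, fun ε ⟨hε, hε1⟩ ↦ ?_⟩
  set L := max 1 (log (1 / ε))
  set M := max 1 (ε⁻¹ * L ^ ((1 : ℝ) / 2))
  have hL : 1 ≤ L := le_max_left _ _
  have hT : -√(2 * L) ^ 2 / 2 = -L := by rw [sq_sqrt (by linarith)]; ring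
  calc ℙ {ω | √M * |Z₁ ω| ≤ |Z₂ ω| + (M + 1) * ε}
      ≤ ENNReal.ofReal (2 * exp (-√(2 * L) ^ 2 / 2) + (√(2 * L) + (M + 1) * ε) / √M) :=
        measure_mul_abs_le_abs_add_le_of_gaussian h₁ h₂
          (sqrt_pos.2 (zero_lt_one.trans_le (le_max_left _ _))) (by positivity) (sqrt_nonneg _)
    _ ≤ ENNReal.ofReal (6 * ε ^ ((1 : ℝ) / 2) * L ^ ((1 : ℝ) / 4)) := by
        rw [hT]
        exact ENNReal.ofReal_le_ofReal
          (two_mul_exp_neg_add_div_sqrt_le hε hε1 hL (le_max_right _ _))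

/-- For independent standard normals `Z₁, Z₂` and `ε ∈ (0,1]`, with
`M = max(1, ε⁻¹ (log₊(1/ε))^{1/2})`, one has
`P(√M |Z₁| ≤ |Z₂| + (M+1) ε) ≤ K ε^{1/2} (log₊(1/ε))^{1/4}` for an absolute `K > 0`. -/
theorem gaussian_ratio_anti_concentration {Ω : Type} [MeasureSpace Ω]
    [IsProbabilityMeasure (ℙ : Measure Ω)]
    (Z₁ Z₂ : Ω → ℝ)
    (h₁ : Measure.map Z₁ ℙ = gaussianReal 0 1)
    (h₂ : Measure.map Z₂ ℙ = gaussianReal 0 1)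
    (hind : IndepFun Z₁ Z₂ ℙ) :
    ∃ K : ℝ, 0 < K ∧ ∀ ε : ℝ, ε ∈ Set.Ioc (0 : ℝ) 1 →
      ℙ {ω | Real.sqrt (max 1 (ε⁻¹ * (max 1 (Real.log (1 / ε))) ^ ((1 : ℝ) / 2))) * |Z₁ ω| ≤
            |Z₂ ω| + (max 1 (ε⁻¹ * (max 1 (Real.log (1 / ε))) ^ ((1 : ℝ) / 2)) + 1) * ε} ≤
        ENNReal.ofReal (K * ε ^ ((1 : ℝ) / 2) * (max 1 (Real.log (1 / ε))) ^ ((1 : ℝ) / 4)) :=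
  gaussian_ratio_anti_concentration_general Z₁ Z₂ h₁ h₂
end

section
/- For all real μ and y with y ≥ 0: if y + μ ≤ 1 then e^{2μy}·(1 − Φ(y + μ)) ≤ e^{1/2}, and if y + μ > 1 then e^{2μy}·(1 − Φ(y + μ)) ≤ (2π)^{−1/2}·e^{−(y−μ)²/2}. -/
noncomputable def stdNormalCDF (x : ℝ) : ℝ :=
  ∫ t in Set.Iic x, Real.exp (-t ^ 2 / 2) / Real.sqrt (2 * Real.pi)

/-! Bound the Gaussian tail by Mills' ratio `1 - Φ(x) ≤ φ(x)/x`, obtained by comparing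
`e^{-t²/2}` with `(t/x) e^{-t²/2}` on `(x, ∞)`, the latter having the explicit primitive
`-e^{-t²/2}/x`. For `x = y + μ > 1` it gives `1 - Φ(x) ≤ φ(x)`, and `e^{2μy} e^{-(y+μ)²/2} = e^{-(y-μ)²/2}`.
For `y + μ ≤ 1` one only needs `1 - Φ ≤ 1` and `2μy ≤ 2y(1 - y) ≤ 1/2`. -/

open Real MeasureTheory Set Filter Topology

lemma exp_neg_sq_div_two_eq (t : ℝ) : exp (-t ^ 2 / 2) = exp (-(1 / 2) * t ^ 2) := by
  ring_nf

lemma integrable_exp_neg_sq_div_two : Integrable fun t : ℝ => exp (-t ^ 2 / 2) := by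
  simpa only [exp_neg_sq_div_two_eq] using integrable_exp_neg_mul_sq (b := 1 / 2) (by norm_num)

lemma integrable_mul_exp_neg_sq_div_two : Integrable fun t : ℝ => t * exp (-t ^ 2 / 2) := by
  simpa only [exp_neg_sq_div_two_eq] using
    integrable_mul_exp_neg_mul_sq (b := 1 / 2) (by norm_num)

lemma integral_exp_neg_sq_div_two : ∫ t : ℝ, exp (-t ^ 2 / 2) = √(2 * π) := by
  simp only [exp_neg_sq_div_two_eq, integral_gaussian]
  congr 1
  field_simp

lemma integral_Ioi_mul_exp_neg_sq_div_two (x : ℝ) :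
    ∫ t in Ioi x, t * exp (-t ^ 2 / 2) = exp (-x ^ 2 / 2) := by
  have hderiv (t : ℝ) : HasDerivAt (fun t => -exp (-t ^ 2 / 2)) (t * exp (-t ^ 2 / 2)) t := by
    have h : HasDerivAt (fun t : ℝ => -t ^ 2 / 2) (-t) t :=
      ((hasDerivAt_pow 2 t).fun_neg.div_const 2).congr_deriv (by norm_num; ring)
    exact h.exp.fun_neg.congr_deriv (by ring)
  have hlim : Tendsto (fun t : ℝ => -exp (-t ^ 2 / 2)) atTop (𝓝 0) := by
    have : Tendsto (fun t : ℝ => -t ^ 2 / 2) atTop atBot :=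
      (tendsto_neg_atTop_atBot.comp (tendsto_pow_atTop two_ne_zero)).atBot_div_const two_pos
    simpa using (tendsto_exp_atBot.comp this).neg
  simpa using integral_Ioi_of_hasDerivAt_of_tendsto
    (hderiv x).continuousAt.continuousWithinAt (fun t _ => hderiv t)
    integrable_mul_exp_neg_sq_div_two.integrableOn hlim

lemma integral_Ioi_exp_neg_sq_div_two_le {x : ℝ} (hx : 0 < x) :
    ∫ t in Ioi x, exp (-t ^ 2 / 2) ≤ exp (-x ^ 2 / 2) / x := by
  rw [le_div_iff₀ hx, ← integral_mul_const, ← integral_Ioi_mul_exp_neg_sq_div_two]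
  refine setIntegral_mono_on (integrable_exp_neg_sq_div_two.integrableOn.mul_const x)
    integrable_mul_exp_neg_sq_div_two.integrableOn measurableSet_Ioi fun t ht => ?_
  rw [mul_comm]
  exact mul_le_mul_of_nonneg_right ht.le (exp_pos _).le

lemma stdNormalCDF_nonneg (x : ℝ) : 0 ≤ stdNormalCDF x :=
  integral_nonneg fun _ => by positivity

lemma one_sub_stdNormalCDF_eq (x : ℝ) :
    1 - stdNormalCDF x = (∫ t in Ioi x, exp (-t ^ 2 / 2)) / √(2 * π) := by
  have hsplit := intervalIntegral.integral_Iic_add_Ioi (b := x)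
    integrable_exp_neg_sq_div_two.integrableOn integrable_exp_neg_sq_div_two.integrableOn
  rw [integral_exp_neg_sq_div_two] at hsplit
  rw [eq_div_iff (by positivity), sub_mul, stdNormalCDF, integral_div,
    div_mul_cancel₀ _ (by positivity)]
  linarith

lemma one_sub_stdNormalCDF_le_div {x : ℝ} (hx : 0 < x) :
    1 - stdNormalCDF x ≤ exp (-x ^ 2 / 2) / x / √(2 * π) := by
  rw [one_sub_stdNormalCDF_eq]
  gcongr
  exact integral_Ioi_exp_neg_sq_div_two_le hx

lemma one_sub_stdNormalCDF_le_of_one_le {x : ℝ} (hx : 1 ≤ x) :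
    1 - stdNormalCDF x ≤ exp (-x ^ 2 / 2) / √(2 * π) := by
  refine (one_sub_stdNormalCDF_le_div (by linarith)).trans ?_
  gcongr
  exact div_le_self (exp_pos _).le hx

/-- For `y ≥ 0`: if `y + μ ≤ 1` then `e^{2μy}(1 - Φ(y+μ)) ≤ e^{1/2}`, and if `y + μ > 1`
then `e^{2μy}(1 - Φ(y+μ)) ≤ (2π)^{-1/2} e^{-(y-μ)²/2}`. -/
theorem exp_mul_gaussian_tail_bound (μ y : ℝ) (hy : 0 ≤ y) :
    (y + μ ≤ 1 → Real.exp (2 * μ * y) * (1 - stdNormalCDF (y + μ)) ≤ Real.exp (1 / 2)) ∧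
    (1 < y + μ → Real.exp (2 * μ * y) * (1 - stdNormalCDF (y + μ)) ≤
      (Real.sqrt (2 * Real.pi))⁻¹ * Real.exp (-(y - μ) ^ 2 / 2)) := by
  constructor
  · intro h
    have h2μy : 2 * μ * y ≤ 1 / 2 := by
      nlinarith [sq_nonneg (2 * y - 1), mul_nonneg hy (by linarith : (0 : ℝ) ≤ 1 - y - μ)]
    calc exp (2 * μ * y) * (1 - stdNormalCDF (y + μ)) ≤ exp (2 * μ * y) * 1 := by
          gcongr
          linarith [stdNormalCDF_nonneg (y + μ)]
      _ ≤ exp (1 / 2) := by simpa using h2μy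
  · intro h
    calc exp (2 * μ * y) * (1 - stdNormalCDF (y + μ))
        ≤ exp (2 * μ * y) * (exp (-(y + μ) ^ 2 / 2) / √(2 * π)) := by
          gcongr
          exact one_sub_stdNormalCDF_le_of_one_le h.le
      _ = (√(2 * π))⁻¹ * exp (-(y - μ) ^ 2 / 2) := by
          rw [mul_div_assoc', ← exp_add, div_eq_inv_mul]
          ring_nf
end

section
/- Let y₁, …, y_n ∈ ℝ and let f̂ ∈ ℝⁿ be the minimizer of ∑_{i=1}^n (y_i − f_i)² over all nondecreasing vectors f (f₁ ≤ f₂ ≤ … ≤ f_n). Then for every index k, f̂_k = max_{i ≤ k} min_{j ≥ k} ( (y_i + y_{i+1} + … + y_j)/(j − i + 1) ). -/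
/-!
Perturbing the minimiser `f` to `f + t • 𝟙_s` along an upper set `s` keeps it monotone for every
`t ≥ 0`, so the residuals `y - f` have nonpositive sum over every upper set. Along a superlevel set
`{f ≥ v}` the perturbation also stays monotone for small `t < 0`, so the residual sum over it is
nonnegative. If `a` is the first index with `f a = f k`, then for `j ≥ k` the residual sum over
`[a, j]` is the one over `{f ≥ f k}` minus the one over the upper set `(j, ∞)`, hence nonnegative,
and `f ≥ f k` on `[a, j]`: the average of `y` over `[a, j]` is at least `f k`. This gives
`f k ≤ max min`; the reverse inequality is the same argument for the reversed order and `-y`.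
-/

open Finset Filter Topology OrderDual

theorem nonpos_of_forall_two_mul_le_mul {a b : ℝ} (h : ∀ t : ℝ, 0 < t → t ≤ 1 → 2 * a ≤ t * b) :
    a ≤ 0 := by
  by_contra! ha
  have hb : 2 * a ≤ b := by simpa using h 1 one_pos le_rfl
  have := h (a / b) (div_pos ha (by linarith)) ((div_le_one (by linarith)).2 (by linarith))
  rw [div_mul_cancel₀ a (by linarith)] at this
  linarith

theorem exists_pos_forall_le_of_pos {ι : Type*} [Finite ι] {p : ι → Prop} {u : ι → ℝ}
    (hu : ∀ i, p i → 0 < u i) : ∃ δ > 0, ∀ i, p i → δ ≤ u i :=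
  (eventually_mem_nhdsWithin.and <| eventually_all.2 fun i => by
    by_cases hp : p i
    · exact ((eventually_le_nhds (hu i hp)).filter_mono nhdsWithin_le_nhds).mono fun _ h _ => h
    · exact .of_forall fun _ h => absurd h hp : ∀ᶠ δ in 𝓝[>] (0 : ℝ), _).exists

def IsIsotonicLSE {ι : Type*} [Preorder ι] [Fintype ι] (y f : ι → ℝ) : Prop :=
  Monotone f ∧ ∀ g : ι → ℝ, Monotone g → ∑ i, (y i - f i) ^ 2 ≤ ∑ i, (y i - g i) ^ 2

namespace IsIsotonicLSE

variable {ι : Type*} [Fintype ι] {y f : ι → ℝ}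

section Preorder

variable [Preorder ι]

theorem sum_residual_mul_sub_nonpos (hf : IsIsotonicLSE y f) {g : ι → ℝ} (hg : Monotone g) :
    ∑ i, (y i - f i) * (g i - f i) ≤ 0 := by
  refine nonpos_of_forall_two_mul_le_mul (b := ∑ i, (g i - f i) ^ 2) fun t ht ht1 => ?_
  have hmono : Monotone fun i => f i + t * (g i - f i) := by
    have : (fun i => f i + t * (g i - f i)) = fun i => (1 - t) * f i + t * g i := by
      ext; ring
    rw [this]
    exact (hf.1.const_mul (by linarith)).add (hg.const_mul ht.le)
  have key := hf.2 _ hmono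
  have expand : ∑ i, (y i - (f i + t * (g i - f i))) ^ 2 = ∑ i, (y i - f i) ^ 2
      - t * (2 * ∑ i, (y i - f i) * (g i - f i)) + t * (t * ∑ i, (g i - f i) ^ 2) := by
    simp only [mul_sum, ← sum_sub_distrib, ← sum_add_distrib]
    exact sum_congr rfl fun i _ => by ring
  rw [expand] at key
  exact le_of_mul_le_mul_left (by linarith) ht

theorem dual (hf : IsIsotonicLSE y f) :
    IsIsotonicLSE (ι := ιᵒᵈ) (fun i => -y (ofDual i)) (fun i => -f (ofDual i)) := by
  refine ⟨fun a b hab => neg_le_neg (hf.1 hab), fun g hg => ?_⟩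
  have := hf.2 (fun i => -g (toDual i)) fun a b hab => neg_le_neg (hg hab)
  calc ∑ i, (-y (ofDual i) - -f (ofDual i)) ^ 2 = ∑ i, (y i - f i) ^ 2 :=
        Fintype.sum_equiv ofDual _ _ fun i => by ring
    _ ≤ ∑ i, (y i - -g (toDual i)) ^ 2 := this
    _ = ∑ i, (-y (ofDual i) - g i) ^ 2 :=
        Fintype.sum_equiv toDual _ _ fun i => by rw [ofDual_toDual]; ring

variable [DecidableEq ι]

theorem mul_sum_residual_nonpos (hf : IsIsotonicLSE y f) {s : Finset ι} {t : ℝ}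
    (hg : Monotone fun i => f i + if i ∈ s then t else 0) :
    t * ∑ i ∈ s, (y i - f i) ≤ 0 := by
  have := hf.sum_residual_mul_sub_nonpos hg
  simp only [add_sub_cancel_left, mul_ite, mul_zero, sum_ite_mem, univ_inter, ← sum_mul] at this
  linarith

theorem sum_residual_nonpos_of_isUpperSet (hf : IsIsotonicLSE y f) {s : Finset ι}
    (hs : IsUpperSet (s : Set ι)) : ∑ i ∈ s, (y i - f i) ≤ 0 := by
  have hind : Monotone fun i => if i ∈ s then (1 : ℝ) else 0 := by
    intro a b hab
    by_cases ha : a ∈ s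
    · have hb : b ∈ s := hs hab ha
      simp [ha, hb]
    · simp only [ha, if_false]; split_ifs <;> norm_num
  simpa using hf.mul_sum_residual_nonpos (hf.1.add hind)

theorem sum_residual_nonneg_of_le (hf : IsIsotonicLSE y f) (v : ℝ) :
    0 ≤ ∑ i with v ≤ f i, (y i - f i) := by
  obtain ⟨δ, hδ, hgap⟩ := exists_pos_forall_le_of_pos (p := fun i => f i < v) (u := fun i => v - f i)
    fun i hi => sub_pos.2 hi
  -- `δ` is at most the gap between `v` and the values of `f` below it.
  have hg : Monotone fun i => f i + if i ∈ ({i | v ≤ f i} : Finset ι) then -δ else 0 := by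
    intro a b hab
    simp only [mem_filter, mem_univ, true_and]
    have := hf.1 hab
    have := hgap a
    split_ifs <;> grind
  have := hf.mul_sum_residual_nonpos hg
  exact (mul_nonneg_iff_of_pos_left hδ).1 (by linarith)

end Preorder

section LinearOrder

variable [LinearOrder ι] [LocallyFiniteOrder ι]

theorem exists_le_forall_le_avg (hf : IsIsotonicLSE y f) (k : ι) :
    ∃ a ≤ k, ∀ j, k ≤ j → f k ≤ (∑ l ∈ Icc a j, y l) / #(Icc a j) := by
  set S : Finset ι := {i | f k ≤ f i}
  have hkS : k ∈ S := by simp [S]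
  set a := S.min' ⟨k, hkS⟩
  have hS : ∀ i, i ∈ S ↔ a ≤ i := fun i =>
    ⟨fun hi => S.min'_le i hi, fun hi => by
      simpa [S] using (mem_filter.1 (S.min'_mem ⟨k, hkS⟩)).2.trans (hf.1 hi)⟩
  refine ⟨a, S.min'_le k hkS, fun j hkj => ?_⟩
  have hblock : S.filter (· ≤ j) = Icc a j := by ext; simp [hS]
  have htail : S.filter (fun i => ¬i ≤ j) = ({i | j < i} : Finset ι) := by
    ext i; simp only [mem_filter, hS, not_le, mem_univ, true_and]
    exact ⟨And.right, fun h => ⟨(S.min'_le k hkS).trans (hkj.trans h.le), h⟩⟩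
  have htail_up : IsUpperSet (({i | j < i} : Finset ι) : Set ι) := fun b c hbc hb => by
    simp only [coe_filter, mem_univ, true_and, Set.mem_ofPred_eq] at hb ⊢
    exact hb.trans_le hbc
  have hres : 0 ≤ ∑ l ∈ Icc a j, (y l - f l) := by
    have := hf.sum_residual_nonneg_of_le (f k)
    rw [← sum_filter_add_sum_filter_not S (· ≤ j), hblock, htail] at this
    linarith [hf.sum_residual_nonpos_of_isUpperSet htail_up]
  have hne : (Icc a j).Nonempty := nonempty_Icc.2 ((S.min'_le k hkS).trans hkj)
  rw [le_div_iff₀ (by exact_mod_cast hne.card_pos)]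
  calc f k * #(Icc a j) ≤ ∑ l ∈ Icc a j, f l := by
        simpa [mul_comm] using card_nsmul_le_sum (Icc a j) f (f k) fun l hl => by
          simpa [S] using (hS l).2 (mem_Icc.1 hl).1
    _ ≤ ∑ l ∈ Icc a j, y l := by simpa using hres

theorem exists_ge_forall_avg_le (hf : IsIsotonicLSE y f) (k : ι) :
    ∃ b ≥ k, ∀ i, i ≤ k → (∑ l ∈ Icc i b, y l) / #(Icc i b) ≤ f k := by
  obtain ⟨b, hbk, hb⟩ := hf.dual.exists_le_forall_le_avg (toDual k)
  refine ⟨ofDual b, hbk, fun i hik => ?_⟩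
  have := hb (toDual i) hik
  rwa [Icc_orderDual_def, sum_map, card_map, sum_neg_distrib, neg_div, neg_le_neg_iff] at this

end LinearOrder

end IsIsotonicLSE

/-- Max–min formula for isotonic least squares regression: if `f̂` minimizes
`∑ (y_i − f_i)²` over nondecreasing vectors `f ∈ ℝⁿ`, then for every `k`,
`f̂ k = max_{i ≤ k} min_{j ≥ k} (average of y over {i, …, j})`. -/
theorem isotonic_lse_maxmin (n : ℕ) (y fhat : Fin n → ℝ)
    (hmono : Monotone fhat)
    (hmin : ∀ g : Fin n → ℝ, Monotone g →
      ∑ i, (y i - fhat i) ^ 2 ≤ ∑ i, (y i - g i) ^ 2)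
    (k : Fin n) :
    fhat k =
      (Finset.Iic k).sup' ⟨k, Finset.mem_Iic.mpr le_rfl⟩ (fun i =>
        (Finset.Ici k).inf' ⟨k, Finset.mem_Ici.mpr le_rfl⟩ (fun j =>
          (∑ l ∈ Finset.Icc i j, y l) / ((Finset.Icc i j).card : ℝ))) := by
  have hf : IsIsotonicLSE y fhat := ⟨hmono, hmin⟩
  apply le_antisymm
  · obtain ⟨a, hak, ha⟩ := hf.exists_le_forall_le_avg k
    exact le_sup'_of_le _ (mem_Iic.2 hak) (le_inf' _ _ fun j hj => ha j (mem_Ici.1 hj))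
  · refine sup'_le _ _ fun i hi => ?_
    obtain ⟨b, hkb, hb⟩ := hf.exists_ge_forall_avg_le k
    exact inf'_le_of_le _ (mem_Ici.2 hkb) (hb i (mem_Iic.1 hi))
end
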